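/- Let V be a finite-dimensional real inner product space, let Δ : V →ₗ[ℝ] V be self-adjoint with ⟪v, Δ v⟫ ≤ 0 for all v ∈ V, let a > 0, and let L := a·id + Δ∘Δ. Fix dt > 0, a vector n̂ ∈ V, a real number E > 0, data φⁿ, φⁿ⁻¹ ∈ V, and scalars rⁿ, rⁿ⁻¹ ∈ ℝ. Then there exists a unique pair (φ, ρ) ∈ V × ℝ satisfying the two equations: (3/2)·φ − 2·φⁿ + (1/2)·φⁿ⁻¹ = dt·Δ( (ρ/√E)·n̂ + L φ ) and (3/2)·ρ − 2·rⁿ + (1/2)·rⁿ⁻¹ = (1/(2√E))·⟪n̂, (3/2)·φ − 2·φⁿ + (1/2)·φⁿ⁻¹⟫. -/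

import Mathlib

/-!
The scheme is a linear equation `F (φ, ρ) = c` for an operator `F` on the finite-dimensional
space `V × ℝ`, so it suffices that `F` is injective. For a solution of the homogeneous equation,
`φ = (2 dt / 3) • Δ w` with `w = (ρ / √E) • n̂ + L φ`, so `⟪φ, w⟫ ≤ 0` because `Δ` is symmetric
and negative semidefinite. On the other hand the second equation makes `(ρ / √E) ⟪n̂, φ⟫` a
square, so `⟪φ, w⟫ ≥ ⟪φ, L φ⟫ = a ‖φ‖² + ‖Δ φ‖² ≥ a ‖φ‖²`; hence `φ = 0` and then `ρ = 0`.
-/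

open RealInnerProductSpace

section

variable {V : Type*} [NormedAddCommGroup V] [InnerProductSpace ℝ V]

theorem LinearMap.IsSymmetric.inner_smul_id_add_comp_self {Δ : V →ₗ[ℝ] V} (hΔ : Δ.IsSymmetric)
    (a : ℝ) (φ : V) : ⟪φ, (a • LinearMap.id + Δ ∘ₗ Δ : V →ₗ[ℝ] V) φ⟫ = a * ⟪φ, φ⟫ + ⟪Δ φ, Δ φ⟫ := by
  simp only [LinearMap.add_apply, LinearMap.smul_apply, LinearMap.id_apply, LinearMap.comp_apply,
    inner_add_right, real_inner_smul_right, hΔ φ (Δ φ)]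

theorem LinearMap.IsSymmetric.inner_le_zero_of_eq_smul_apply {Δ : V →ₗ[ℝ] V}
    (hΔsym : Δ.IsSymmetric) (hΔneg : ∀ v : V, ⟪v, Δ v⟫ ≤ 0) {t : ℝ} (ht : 0 ≤ t) {φ w : V}
    (h : φ = t • Δ w) : ⟪φ, w⟫ ≤ 0 := by
  rw [h, real_inner_smul_left, hΔsym w w]
  exact mul_nonpos_of_nonneg_of_nonpos ht (hΔneg w)

/-- The BDF2 SAV step with the data `φⁿ, φⁿ⁻¹, rⁿ, rⁿ⁻¹` moved to the right-hand side;
`s` stands for `√E`. -/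
noncomputable def savOperator (Δ L : V →ₗ[ℝ] V) (dt : ℝ) (nhat : V) (s : ℝ) :
    V × ℝ →ₗ[ℝ] V × ℝ where
  toFun p := ((3 / 2 : ℝ) • p.1 - dt • Δ ((p.2 / s) • nhat + L p.1),
    3 / 2 * p.2 - 1 / (2 * s) * ⟪nhat, (3 / 2 : ℝ) • p.1⟫)
  map_add' p q := by
    simp only [Prod.fst_add, Prod.snd_add, Prod.mk_add_mk, map_add, smul_add, inner_add_right,
      add_div, add_smul, Prod.mk.injEq]
    constructor
    · module
    · ring
  map_smul' c p := by
    simp only [Prod.smul_fst, Prod.smul_snd, Prod.smul_mk, RingHom.id_apply, map_smul,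
      real_inner_smul_right, smul_eq_mul, mul_div_assoc, smul_smul, map_add, smul_sub,
      smul_add, Prod.mk.injEq]
    constructor
    · module
    · ring

theorem savOperator_apply (Δ L : V →ₗ[ℝ] V) (dt : ℝ) (nhat : V) (s : ℝ) (p : V × ℝ) :
    savOperator Δ L dt nhat s p = ((3 / 2 : ℝ) • p.1 - dt • Δ ((p.2 / s) • nhat + L p.1),
      3 / 2 * p.2 - 1 / (2 * s) * ⟪nhat, (3 / 2 : ℝ) • p.1⟫) :=
  rfl

theorem savOperator_injective {Δ : V →ₗ[ℝ] V} (hΔsym : Δ.IsSymmetric)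
    (hΔneg : ∀ v : V, ⟪v, Δ v⟫ ≤ 0) {a : ℝ} (ha : 0 < a) {dt : ℝ} (hdt : 0 ≤ dt) (nhat : V)
    (s : ℝ) : Function.Injective (savOperator Δ (a • LinearMap.id + Δ ∘ₗ Δ) dt nhat s) := by
  rw [← LinearMap.ker_eq_bot, LinearMap.ker_eq_bot']
  rintro ⟨φ, ρ⟩ hp
  simp only [savOperator_apply, Prod.mk_eq_zero, real_inner_smul_right] at hp
  obtain ⟨h1, h2⟩ := hp
  set w := (ρ / s) • nhat + (a • LinearMap.id + Δ ∘ₗ Δ : V →ₗ[ℝ] V) φ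
  have hρ : ρ = ⟪nhat, φ⟫ / (2 * s) := by linear_combination (2 / 3 : ℝ) * h2
  have hφw : ⟪φ, w⟫ ≤ 0 :=
    hΔsym.inner_le_zero_of_eq_smul_apply hΔneg (by positivity : 0 ≤ 2 / 3 * dt)
      (by linear_combination (norm := module) (2 / 3 : ℝ) • h1)
  have hsq : ⟪φ, (ρ / s) • nhat⟫ = ⟪nhat, φ⟫ ^ 2 / (2 * s ^ 2) := by
    rw [real_inner_smul_right, real_inner_comm, hρ]
    ring
  have hwφ : a * ⟪φ, φ⟫ ≤ ⟪φ, w⟫ := by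
    rw [inner_add_right, hΔsym.inner_smul_id_add_comp_self, hsq]
    have hΔφ := real_inner_self_nonneg (x := Δ φ)
    have hq : 0 ≤ ⟪nhat, φ⟫ ^ 2 / (2 * s ^ 2) := by positivity
    linarith
  have hφ : φ = 0 := by
    have hφφ : ⟪φ, φ⟫ ≤ 0 := nonpos_of_mul_nonpos_right (hwφ.trans hφw) ha
    exact inner_self_eq_zero.mp (le_antisymm hφφ real_inner_self_nonneg)
  simp [hρ, hφ]

theorem sav_equations_iff (Δ L : V →ₗ[ℝ] V) (dt : ℝ) (nhat : V) (s : ℝ) (φn φn1 : V)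
    (rn rn1 : ℝ) (p : V × ℝ) :
    ((3 / 2 : ℝ) • p.1 - (2 : ℝ) • φn + (1 / 2 : ℝ) • φn1 = dt • Δ ((p.2 / s) • nhat + L p.1) ∧
      3 / 2 * p.2 - 2 * rn + 1 / 2 * rn1
        = 1 / (2 * s) * ⟪nhat, (3 / 2 : ℝ) • p.1 - (2 : ℝ) • φn + (1 / 2 : ℝ) • φn1⟫) ↔
    savOperator Δ L dt nhat s p = ((2 : ℝ) • φn - (1 / 2 : ℝ) • φn1,
      2 * rn - 1 / 2 * rn1 - 1 / (2 * s) * ⟪nhat, (2 : ℝ) • φn - (1 / 2 : ℝ) • φn1⟫) := by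
  rw [savOperator_apply, Prod.mk.injEq, sub_add ((3 / 2 : ℝ) • p.1), inner_sub_right]
  constructor <;> rintro ⟨h1, h2⟩ <;>
    exact ⟨by linear_combination (norm := module) h1, by linear_combination h2⟩

end

theorem sav_scheme_unique_solvability_general
    {V : Type*} [NormedAddCommGroup V] [InnerProductSpace ℝ V]
    [FiniteDimensional ℝ V]
    (Δ : V →ₗ[ℝ] V) (hΔsym : Δ.IsSymmetric)
    (hΔneg : ∀ v : V, (inner ℝ v (Δ v) : ℝ) ≤ 0)
    (a : ℝ) (ha : 0 < a)
    (L : V →ₗ[ℝ] V) (hL : L = a • LinearMap.id + Δ ∘ₗ Δ)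
    (dt : ℝ) (hdt : 0 < dt)
    (nhat : V) (E : ℝ)
    (φn φn1 : V) (rn rn1 : ℝ) :
    ∃! p : V × ℝ,
      ((3:ℝ)/2) • p.1 - (2:ℝ) • φn + ((1:ℝ)/2) • φn1
          = dt • Δ ((p.2 / Real.sqrt E) • nhat + L p.1) ∧
      (3/2) * p.2 - 2 * rn + (1/2) * rn1
          = (1 / (2 * Real.sqrt E)) *
            (inner ℝ nhat (((3:ℝ)/2) • p.1 - (2:ℝ) • φn + ((1:ℝ)/2) • φn1) : ℝ) := by
  subst hL
  have hinj := savOperator_injective hΔsym hΔneg ha hdt.le nhat (Real.sqrt E)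
  have hbij : Function.Bijective _ := ⟨hinj, LinearMap.injective_iff_surjective.mp hinj⟩
  exact (existsUnique_congr (sav_equations_iff _ _ dt nhat _ φn φn1 rn rn1)).mpr
    (hbij.existsUnique _)

/-- Unique solvability of one step of the BDF2 SAV scheme for the SPFC equation. -/
theorem sav_scheme_unique_solvability
    {V : Type*} [NormedAddCommGroup V] [InnerProductSpace ℝ V]
    [FiniteDimensional ℝ V]
    (Δ : V →ₗ[ℝ] V) (hΔsym : Δ.IsSymmetric)
    (hΔneg : ∀ v : V, (inner ℝ v (Δ v) : ℝ) ≤ 0)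
    (a : ℝ) (ha : 0 < a)
    (L : V →ₗ[ℝ] V) (hL : L = a • LinearMap.id + Δ ∘ₗ Δ)
    (dt : ℝ) (hdt : 0 < dt)
    (nhat : V) (E : ℝ) (hE : 0 < E)
    (φn φn1 : V) (rn rn1 : ℝ) :
    ∃! p : V × ℝ,
      ((3:ℝ)/2) • p.1 - (2:ℝ) • φn + ((1:ℝ)/2) • φn1
          = dt • Δ ((p.2 / Real.sqrt E) • nhat + L p.1) ∧
      (3/2) * p.2 - 2 * rn + (1/2) * rn1
          = (1 / (2 * Real.sqrt E)) *
            (inner ℝ nhat (((3:ℝ)/2) • p.1 - (2:ℝ) • φn + ((1:ℝ)/2) • φn1) : ℝ) :=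
  sav_scheme_unique_solvability_general Δ hΔsym hΔneg a ha L hL dt hdt nhat E φn φn1 rn rn1
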